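/- arXiv:1803.11197 — 5 statements merged into one kernel-verified Lean document; each statement's English description precedes it below -/
import Mathlib

section
/- Let H be a Hermitian n×n matrix, J ∈ ℂ^n, and a ∈ ℝ, and let A be the (n+1)×(n+1) Hermitian block matrix with top-left entry a, top-right row -J†, bottom-left column -J, and bottom-right block H. Then A is positive semidefinite and singular with kernel vector of the form (1, V)ᵀ if and only if H is positive semidefinite, H V = J, and a = V† H V. -/
/-!
If `H V = J` and `a = V† H V`, the bordered matrix factors as `Tᴴ H T` with `T = [-V | 1]`, so it
is positive semidefinite whenever `H` is, and `(1, V)` lies in the kernel of `T`. Conversely, the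
two block rows of `A (1, V)ᵀ = 0` say exactly `a = J† V` and `H V = J`, and `H` is a principal
submatrix of `A`, hence positive semidefinite, hence Hermitian, which turns `J† V` into `V† H V`.
-/

open Complex Matrix ComplexOrder

namespace Matrix

variable {m n R : Type*} [Fintype n]

section Ring

variable [Ring R] [StarRing R]

theorem fromBlocks_eq_conjTranspose_fromCols_mul_mul [DecidableEq n] (H : Matrix n n R)
    (C : Matrix n m R) :
    fromBlocks (Cᴴ * H * C) (-(Cᴴ * H)) (-(H * C)) H =
      (fromCols (-C) 1)ᴴ * H * fromCols (-C) 1 := by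
  rw [conjTranspose_fromCols_eq_fromRows_conjTranspose, mul_fromCols, fromRows_mul,
    fromRows_mul, fromRows_mul, fromCols_fromRows_eq_fromBlocks]
  simp

theorem PosSemidef.fromBlocks_conjTranspose_mul_mul [PartialOrder R] [Finite m]
    {H : Matrix n n R} (hH : H.PosSemidef) (C : Matrix n m R) :
    (fromBlocks (Cᴴ * H * C) (-(Cᴴ * H)) (-(H * C)) H).PosSemidef := by
  classical
  rw [fromBlocks_eq_conjTranspose_fromCols_mul_mul]
  exact hH.conjTranspose_mul_mul_same _

end Ring

variable [CommRing R] [StarRing R]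

def borderedMatrix (a : R) (J : n → R) (H : Matrix n n R) :
    Matrix (Fin 1 ⊕ n) (Fin 1 ⊕ n) R :=
  fromBlocks !![a] (-replicateRow (Fin 1) (star J)) (-replicateCol (Fin 1) J) H

theorem borderedMatrix_mulVec_sumElim_eq_zero_iff (a : R) (J V : n → R) (H : Matrix n n R) :
    borderedMatrix a J H *ᵥ Sum.elim (fun _ => 1) V = 0 ↔ a = star J ⬝ᵥ V ∧ H *ᵥ V = J := by
  have htop : !![a] *ᵥ (fun _ => 1) + -replicateRow (Fin 1) (star J) *ᵥ V =
      fun _ => a - star J ⬝ᵥ V := by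
    ext i
    simp [sub_eq_add_neg, neg_mulVec, replicateRow_mulVec_eq_const]
  have hbot : -replicateCol (Fin 1) J *ᵥ (fun _ => 1) + H *ᵥ V = H *ᵥ V - J := by
    ext i
    simp [mulVec, dotProduct, sub_eq_neg_add]
  rw [borderedMatrix, fromBlocks_mulVec, ← Sum.elim_zero_zero, Sum.elim_eq_iff,
    Sum.elim_comp_inl, Sum.elim_comp_inr, htop, hbot]
  simp [funext_iff, sub_eq_zero]

theorem IsHermitian.star_mulVec_dotProduct {H : Matrix n n R} (hH : H.IsHermitian) (V : n → R) :
    star (H *ᵥ V) ⬝ᵥ V = star V ⬝ᵥ H *ᵥ V := by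
  rw [star_mulVec, hH.eq, ← dotProduct_mulVec]

theorem PosSemidef.posSemidef_borderedMatrix [PartialOrder R] {H : Matrix n n R}
    (hH : H.PosSemidef) (V : n → R) :
    (borderedMatrix (star V ⬝ᵥ H *ᵥ V) (H *ᵥ V) H).PosSemidef := by
  convert hH.fromBlocks_conjTranspose_mul_mul (replicateCol (Fin 1) V) using 1
  have hCH : (replicateCol (Fin 1) V)ᴴ * H = replicateRow (Fin 1) (star (H *ᵥ V)) := by
    rw [conjTranspose_replicateCol, ← replicateRow_vecMul, star_mulVec, hH.isHermitian.eq]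
  rw [borderedMatrix, hCH, ← replicateCol_mulVec H V, replicateRow_mul_replicateCol,
    hH.isHermitian.star_mulVec_dotProduct]
  congr 1
  ext i j
  simp

end Matrix

theorem stmt3_general (n : ℕ) (H : Matrix (Fin n) (Fin n) ℂ)
    (J : Fin n → ℂ) (a : ℝ) (V : Fin n → ℂ)
    (A : Matrix (Fin 1 ⊕ Fin n) (Fin 1 ⊕ Fin n) ℂ)
    (hA : A = Matrix.fromBlocks !![(a : ℂ)]
      (Matrix.of fun _ i => -(starRingEnd ℂ) (J i))
      (Matrix.of fun i _ => -(J i)) H) :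
    (A.PosSemidef ∧ A.mulVec (Sum.elim (fun _ => (1 : ℂ)) V) = 0) ↔
      (H.PosSemidef ∧ H.mulVec V = J ∧ (a : ℂ) = star V ⬝ᵥ H.mulVec V) := by
  obtain rfl : A = borderedMatrix (a : ℂ) J H := hA
  rw [borderedMatrix_mulVec_sumElim_eq_zero_iff]
  constructor
  · rintro ⟨hA, ha, rfl⟩
    have hH : H.PosSemidef := hA.submatrix Sum.inr
    exact ⟨hH, rfl, ha.trans (hH.isHermitian.star_mulVec_dotProduct V)⟩
  · rintro ⟨hH, rfl, ha⟩
    refine ⟨?_, ha.trans (hH.isHermitian.star_mulVec_dotProduct V).symm, rfl⟩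
    rw [ha]
    exact hH.posSemidef_borderedMatrix V

/-- Characterization of the bordered matrix `A = [[a, -J†],[-J, H]]` being PSD and
singular with kernel vector `(1, V)ᵀ`. -/
theorem stmt3 (n : ℕ) (H : Matrix (Fin n) (Fin n) ℂ) (hH : H.IsHermitian)
    (J : Fin n → ℂ) (a : ℝ) (V : Fin n → ℂ)
    (A : Matrix (Fin 1 ⊕ Fin n) (Fin 1 ⊕ Fin n) ℂ)
    (hA : A = Matrix.fromBlocks !![(a : ℂ)]
      (Matrix.of fun _ i => -(starRingEnd ℂ) (J i))
      (Matrix.of fun i _ => -(J i)) H) :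
    (A.PosSemidef ∧ A.mulVec (Sum.elim (fun _ => (1 : ℂ)) V) = 0) ↔
      (H.PosSemidef ∧ H.mulVec V = J ∧ (a : ℂ) = star V ⬝ᵥ H.mulVec V) :=
  stmt3_general n H J a V A hA
end

section
/- In the 3-bus radial network with y_{01} = y, Re(y) > 0, y_{12} = 1, the total real consumption is bounded: for all (V_1, V_2) ∈ ℂ², Re(S_1 + S_2) ≥ -|y|²/(4 Re(y)). -/
set_option maxRecDepth 8000


open Complex

/-- Total real power consumption in the 3-bus chain is bounded:
`Re(S₁+S₂) ≥ -|y|²/(4 Re y)`. -/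
theorem stmt7 (y : ℂ) (hy : 0 < y.re) (V₁ V₂ : ℂ)
    (S₁ S₂ : ℂ)
    (hS₁ : S₁ = V₁ * (starRingEnd ℂ) y * ((starRingEnd ℂ) V₁ - 1)
      + V₁ * (starRingEnd ℂ) (V₁ - V₂))
    (hS₂ : S₂ = V₂ * (starRingEnd ℂ) (V₂ - V₁)) :
    -(Complex.normSq y) / (4 * y.re) ≤ (S₁ + S₂).re := by
  subst hS₁ hS₂
  obtain ⟨c, d⟩ := y
  obtain ⟨a, b⟩ := V₁
  obtain ⟨e, f⟩ := V₂
  simp only [Complex.add_re, Complex.mul_re, Complex.sub_re, Complex.sub_im,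
    Complex.mul_im, Complex.one_re, Complex.one_im, Complex.normSq_mk,
    Complex.conj_re, Complex.conj_im] at hy ⊢
  rw [div_le_iff₀ (by positivity)]
  nlinarith [sq_nonneg (2*c*a - c), sq_nonneg (2*c*b - d), sq_nonneg (a - e),
    sq_nonneg (b - f), hy.le, mul_nonneg hy.le (sq_nonneg (a-e)),
    mul_nonneg hy.le (sq_nonneg (b-f))]
end

section
/- Let A be an (n+1)×(n+1) Hermitian matrix whose off-diagonal sparsity pattern is the adjacency structure of a tree T on n+1 vertices, with A_{ik} ≠ 0 for every edge {i,k} of T. If A is positive semidefinite, then the kernel of A has dimension at most 1. -/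
/-!
If `A x = 0` and `x` vanishes at a vertex `w` of the tree, cut the tree at `w`: for a neighbour
`u` of `w`, let `S` be the branch containing `u`. Truncating `x` to `S` gives a vector `y` with
`(A y)_j = (A x)_j = 0` for `j ∈ S`, so `y* A y = 0` and hence `A y = 0` by positive
semidefiniteness. Reading `A y = 0` at `w`, whose only neighbour in `S` is `u`, gives
`A_{wu} x_u = 0`, i.e. `x_u = 0`. By connectedness a kernel vector vanishing at one vertex is
zero, so evaluation at a vertex embeds the kernel into `ℂ`.
-/

open Complex Matrix ComplexOrder

namespace SimpleGraph

variable {V : Type*} {G : SimpleGraph V}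

theorem IsAcyclic.eq_of_adj_of_walk_of_notMem_support (hG : G.IsAcyclic) {w u₁ u₂ : V}
    (h₁ : G.Adj w u₁) (h₂ : G.Adj w u₂) (p : G.Walk u₂ u₁) (hp : w ∉ p.support) : u₁ = u₂ := by
  have hmem := isBridge_iff_forall_walk_mem_edges.mp (isAcyclic_iff_forall_adj_isBridge.mp hG h₁)
    (.cons h₂ p)
  rw [Walk.edges_cons, List.mem_cons] at hmem
  rcases hmem with h | h
  · exact Sym2.congr_right.mp h
  · exact absurd (p.fst_mem_support_of_mem_edges h) hp

end SimpleGraph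

namespace Matrix.PosSemidef

variable {n 𝕜 : Type*} [Fintype n] [RCLike 𝕜] {A : Matrix n n 𝕜}

theorem mulVec_indicator_eq_zero (hA : A.PosSemidef) {x : n → 𝕜} (hx : A *ᵥ x = 0) {S : Set n}
    (hS : ∀ j ∈ S, ∀ k ∉ S, A j k * x k = 0) : A *ᵥ S.indicator x = 0 := by
  have hrow : ∀ j ∈ S, (A *ᵥ S.indicator x) j = 0 := fun j hj => by
    refine (Finset.sum_congr rfl fun k _ => ?_).trans (congrFun hx j)
    by_cases hk : k ∈ S
    · rw [Set.indicator_of_mem hk]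
    · rw [Set.indicator_of_notMem hk, mul_zero, hS j hj k hk]
  rw [← hA.dotProduct_mulVec_zero_iff]
  refine Finset.sum_eq_zero fun j _ => ?_
  by_cases hj : j ∈ S
  · rw [hrow j hj, mul_zero]
  · rw [Pi.star_apply, Set.indicator_of_notMem hj, star_zero, zero_mul]

variable {G : SimpleGraph n}

theorem apply_eq_zero_of_adj (hA : A.PosSemidef) (hG : G.IsAcyclic)
    (hsupp : ∀ i k, i ≠ k → A i k ≠ 0 → G.Adj i k) {x : n → 𝕜} (hx : A *ᵥ x = 0) {w u : n}
    (hw : x w = 0) (hadj : G.Adj w u) (hwu : A w u ≠ 0) : x u = 0 := by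
  set S : Set n := {v | ∃ p : G.Walk u v, w ∉ p.support}
  have hu : u ∈ S := ⟨.nil, by simpa using hadj.ne⟩
  have hS : ∀ j ∈ S, ∀ k ∉ S, A j k * x k = 0 := by
    rintro j ⟨p, hp⟩ k hk
    by_cases hkw : k = w
    · rw [hkw, hw, mul_zero]
    have hjk : A j k = 0 := by
      by_contra hjk
      have hadj_jk := hsupp j k (fun h => hk (h ▸ ⟨p, hp⟩)) hjk
      exact hk ⟨p.concat hadj_jk, by simpa [SimpleGraph.Walk.support_concat, hp] using Ne.symm hkw⟩
    rw [hjk, zero_mul]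
  have hrow_w : (A *ᵥ S.indicator x) w = A w u * x u := by
    refine (Finset.sum_eq_single u (fun k _ hku => ?_) (by simp)).trans ?_
    · by_cases hk : k ∈ S
      · obtain ⟨p, hp⟩ := hk
        have hwk : A w k = 0 := by
          by_contra hwk
          have hkw : w ≠ k := fun h => hp (h ▸ p.end_mem_support)
          exact hku (hG.eq_of_adj_of_walk_of_notMem_support (hsupp w k hkw hwk) hadj p hp)
        exact mul_eq_zero_of_left hwk _
      · rw [Set.indicator_of_notMem hk, mul_zero]
    · rw [Set.indicator_of_mem hu]
  have hAwu : A w u * x u = 0 := by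
    rw [← hrow_w, hA.mulVec_indicator_eq_zero hx hS, Pi.zero_apply]
  exact (mul_eq_zero.mp hAwu).resolve_left hwu

theorem eq_zero_of_mulVec_eq_zero_of_apply_eq_zero (hA : A.PosSemidef) (hG : G.IsAcyclic)
    (hconn : G.Preconnected) (hsupp : ∀ i k, i ≠ k → (A i k ≠ 0 ↔ G.Adj i k)) {x : n → 𝕜}
    (hx : A *ᵥ x = 0) {v : n} (hv : x v = 0) : x = 0 := by
  funext u
  obtain ⟨p⟩ := hconn v u
  induction p with
  | nil => exact hv
  | cons hadj _ ih =>
    exact ih (hA.apply_eq_zero_of_adj hG (fun i k hik => (hsupp i k hik).mp) hx hv hadj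
      ((hsupp _ _ hadj.ne).mpr hadj))

end Matrix.PosSemidef

theorem stmt10_general (n : ℕ) (T : SimpleGraph (Fin (n + 1)))
    (htree : T.Connected ∧ T.IsAcyclic)
    (A : Matrix (Fin (n + 1)) (Fin (n + 1)) ℂ)
    (hsupp : ∀ i k, i ≠ k → (A i k ≠ 0 ↔ T.Adj i k))
    (hpsd : A.PosSemidef) :
    Module.finrank ℂ (LinearMap.ker A.mulVecLin) ≤ 1 := by
  let eval₀ : LinearMap.ker A.mulVecLin →ₗ[ℂ] ℂ :=
    (LinearMap.proj 0).comp (LinearMap.ker A.mulVecLin).subtype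
  have heval₀ : Function.Injective eval₀ := by
    refine (injective_iff_map_eq_zero eval₀).mpr fun x hx => Subtype.ext ?_
    exact hpsd.eq_zero_of_mulVec_eq_zero_of_apply_eq_zero htree.2 htree.1.preconnected hsupp
      x.2 hx
  simpa using LinearMap.finrank_le_finrank_of_injective heval₀

/-- Tree case of van der Holst's bound: a PSD Hermitian matrix whose off-diagonal support
is the edge set of a tree has nullity at most 1. -/
theorem stmt10 (n : ℕ) (T : SimpleGraph (Fin (n + 1)))
    (htree : T.Connected ∧ T.IsAcyclic)
    (A : Matrix (Fin (n + 1)) (Fin (n + 1)) ℂ) (hherm : A.IsHermitian)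
    (hsupp : ∀ i k, i ≠ k → (A i k ≠ 0 ↔ T.Adj i k))
    (hpsd : A.PosSemidef) :
    Module.finrank ℂ (LinearMap.ker A.mulVecLin) ≤ 1 :=
  stmt10_general n T htree A hsupp hpsd
end

section
/- Let H be an n×n Hermitian matrix with real entries that is positive semidefinite, has nonpositive off-diagonal entries, and whose off-diagonal zero pattern is that of a connected graph G (H_{ik} < 0 iff i~k). If additionally for some nonempty set B of vertices there are weights b_i > 0 for i ∈ B, then any V ∈ ℂ^n with H V = 0 and Σ_{i∈B} b_i V_i = 0, where V can be chosen entrywise real nonnegative, must be the zero vector. -/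
/-!
Since the weights are positive on `B` and `V ≥ 0`, the constraint forces `V` to vanish on `B`.
If `V j = 0`, row `j` of `H V = 0` is a sum of nonpositive terms `H j k * V k`, so each vanishes,
and `H j k < 0` gives `V k = 0` for every neighbour `k` of `j`; connectivity spreads the zero
to every vertex.
-/

open Matrix

theorem SimpleGraph.Reachable.of_adj_imp {V : Type*} {G : SimpleGraph V} {P : V → Prop}
    (hP : ∀ u v, G.Adj u v → P u → P v) {u v : V} (h : G.Reachable u v) (hu : P u) : P v := by
  obtain ⟨w⟩ := h
  induction w with
  | nil => exact hu
  | cons hadj _ ih => exact ih (hP _ _ hadj hu)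

theorem Finset.eq_zero_of_sum_mul_eq_zero {ι : Type*} {s : Finset ι} {b V : ι → ℝ}
    (hb : ∀ i ∈ s, 0 < b i) (hV : ∀ i, 0 ≤ V i) (hsum : ∑ i ∈ s, b i * V i = 0) :
    ∀ i ∈ s, V i = 0 := by
  intro i hi
  have hterm := (Finset.sum_eq_zero_iff_of_nonneg fun i hi => mul_nonneg (hb i hi).le (hV i)).mp
    hsum i hi
  exact (mul_eq_zero.mp hterm).resolve_left (hb i hi).ne'

theorem Matrix.eq_zero_of_mulVec_apply_eq_zero {ι : Type*} [Fintype ι] {H : Matrix ι ι ℝ}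
    {V : ι → ℝ} {j k : ι} (hoff : ∀ x, x ≠ j → H j x ≤ 0) (hV : ∀ i, 0 ≤ V i)
    (hrow : (H *ᵥ V) j = 0) (hj : V j = 0) (hjk : H j k < 0) : V k = 0 := by
  have hnonpos : ∀ x ∈ Finset.univ, H j x * V x ≤ 0 := by
    intro x _
    by_cases hx : x = j
    · simp [hx, hj]
    · exact mul_nonpos_of_nonpos_of_nonneg (hoff x hx) (hV x)
  have hterm := (Finset.sum_eq_zero_iff_of_nonpos hnonpos).mp hrow k (Finset.mem_univ k)
  exact (mul_eq_zero.mp hterm).resolve_left hjk.ne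

theorem stmt18_general (n : ℕ) (G : SimpleGraph (Fin n))
    (hconn : G.Connected)
    (H : Matrix (Fin n) (Fin n) ℝ)
    (hpattern : ∀ i k, i ≠ k → (H i k < 0 ↔ G.Adj i k))
    (hoff : ∀ i k, i ≠ k → ¬ G.Adj i k → H i k = 0)
    (B : Finset (Fin n)) (hB : B.Nonempty)
    (b : Fin n → ℝ) (hb : ∀ i ∈ B, 0 < b i)
    (V : Fin n → ℝ) (hVpos : ∀ i, 0 ≤ V i)
    (hker : H.mulVec V = 0) (hconstraint : ∑ i ∈ B, b i * V i = 0) :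
    V = 0 := by
  have hoff_nonpos : ∀ i k, k ≠ i → H i k ≤ 0 := fun i k hki => by
    by_cases hadj : G.Adj i k
    · exact ((hpattern i k hki.symm).mpr hadj).le
    · exact (hoff i k hki.symm hadj).le
  have hspread : ∀ j k, G.Adj j k → V j = 0 → V k = 0 := fun j k hadj hj =>
    eq_zero_of_mulVec_apply_eq_zero (hoff_nonpos j) hVpos (congrFun hker j) hj
      ((hpattern j k hadj.ne).mpr hadj)
  obtain ⟨i₀, hi₀⟩ := hB
  funext k
  exact (hconn.preconnected i₀ k).of_adj_imp hspread
    (Finset.eq_zero_of_sum_mul_eq_zero hb hVpos hconstraint i₀ hi₀)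

/-- Abstraction of the key step of Theorem 3: a nonnegative kernel vector of a PSD matrix
with connected negative off-diagonal pattern which additionally satisfies a positive
linear constraint on a nonempty vertex set must vanish. -/
theorem stmt18 (n : ℕ) (G : SimpleGraph (Fin n)) [DecidableRel G.Adj]
    (hconn : G.Connected)
    (H : Matrix (Fin n) (Fin n) ℝ) (hsymm : H.IsSymm) (hpsd : H.PosSemidef)
    (hpattern : ∀ i k, i ≠ k → (H i k < 0 ↔ G.Adj i k))
    (hoff : ∀ i k, i ≠ k → ¬ G.Adj i k → H i k = 0)
    (B : Finset (Fin n)) (hB : B.Nonempty)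
    (b : Fin n → ℝ) (hb : ∀ i ∈ B, 0 < b i)
    (V : Fin n → ℝ) (hVpos : ∀ i, 0 ≤ V i)
    (hker : H.mulVec V = 0) (hconstraint : ∑ i ∈ B, b i * V i = 0) :
    V = 0 :=
  stmt18_general n G hconn H hpattern hoff B hB b hb V hVpos hker hconstraint
end

section
/- For the 3-bus network with y_{01} = y (Im y ≠ 0), y_{12} = 1: the choice C_1 = C_2 = i (pure imaginary, equal) makes H_c = [[Re(iy + i), -(i + conj(i))/2],[-(conj(i)+i)/2, Re(i)]] = [[-Im y, 0],[0, 0]], which is positive semidefinite iff Im(y) < 0; it is singular with kernel spanned by (0,1)ᵀ, and J_c = (iy/2, 0)ᵀ satisfies J_c†(0,1)ᵀ = 0, so the equations H_c V = J_c, H_c W = 0, J_c† W = 0 have a simultaneous solution with W ≠ 0. -/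
open Complex Matrix ComplexOrder

/-- The choice `C₁ = C₂ = i` in the 3-bus chain yields `H_c = [[-Im y, 0],[0,0]]`, which
is PSD iff `Im y < 0`, is singular with kernel spanned by `(0,1)ᵀ`, and together with
`J_c = (iy/2, 0)ᵀ` admits simultaneous solutions of `H_c V = J_c`, `H_c W = 0`,
`J_c† W = 0` with `W ≠ 0`. -/
theorem stmt19 (y : ℂ) (hy : y.im ≠ 0)
    (Hc : Matrix (Fin 2) (Fin 2) ℂ)
    (hHc : Hc = !![((Complex.I * (y + 1)).re : ℂ),
        -(Complex.I + (starRingEnd ℂ) Complex.I) / 2;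
      -((starRingEnd ℂ) Complex.I + Complex.I) / 2, (((Complex.I : ℂ).re : ℝ) : ℂ)])
    (J : Fin 2 → ℂ) (hJ : J = ![Complex.I * y / 2, 0]) :
    Hc = !![((-y.im : ℝ) : ℂ), 0; 0, 0] ∧
      (Hc.PosSemidef ↔ y.im < 0) ∧
      Hc.mulVec ![0, 1] = 0 ∧
      (∀ W : Fin 2 → ℂ, Hc.mulVec W = 0 → ∃ t : ℂ, W = t • ![(0 : ℂ), 1]) ∧
      star J ⬝ᵥ ![(0 : ℂ), 1] = 0 ∧
      (∃ V : Fin 2 → ℂ, Hc.mulVec V = J) ∧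
      (![(0 : ℂ), 1] : Fin 2 → ℂ) ≠ 0 := by
  have hHc' : Hc = !![((-y.im : ℝ) : ℂ), 0; 0, 0] := by
    subst hHc
    ext i j
    fin_cases i <;> fin_cases j <;>
      simp [Complex.ext_iff, Complex.mul_re, Complex.add_re, Complex.add_im,
        Complex.conj_I, Complex.div_im, Complex.div_re] <;> ring
  subst hHc'
  refine ⟨rfl, ?_, ?_, ?_, ?_, ?_, ?_⟩
  · constructor
    · intro h
      have h0 := h.dotProduct_mulVec_nonneg ![1, 0]
      have : (0 : ℂ) ≤ ((-y.im : ℝ) : ℂ) := by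
        simpa [Matrix.mulVec, dotProduct, Fin.sum_univ_two] using h0
      rw [Complex.le_def] at this
      simp at this
      exact lt_of_le_of_ne this hy
    · intro h
      refine Matrix.PosSemidef.of_dotProduct_mulVec_nonneg ?_ ?_
      · ext i j
        fin_cases i <;> fin_cases j <;>
          simp [Matrix.conjTranspose_apply]
      · intro x
        have : star x ⬝ᵥ (!![((-y.im : ℝ) : ℂ), 0; 0, 0]).mulVec x
            = ((-y.im : ℝ) : ℂ) * (star (x 0) * x 0) := by
          simp [Matrix.mulVec, dotProduct, Fin.sum_univ_two, Matrix.vecHead]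
          ring
        rw [this, show (star (x 0) * x 0) = ((Complex.normSq (x 0) : ℝ) : ℂ) by
          simp [Complex.normSq_eq_conj_mul_self], ← Complex.ofReal_mul]
        rw [Complex.zero_le_real]
        exact mul_nonneg (by linarith) (Complex.normSq_nonneg _)
  · ext i
    fin_cases i <;> simp [Matrix.mulVec, dotProduct, Fin.sum_univ_two]
  · intro W hW
    have h0 : ((-y.im : ℝ) : ℂ) * W 0 = 0 := by
      have := congrFun hW 0
      simpa [Matrix.mulVec, dotProduct, Fin.sum_univ_two, Matrix.vecHead] using this
    have hW0 : W 0 = 0 := by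
      rcases mul_eq_zero.mp h0 with h | h
      · exact absurd (by exact_mod_cast h) (neg_ne_zero.mpr hy)
      · exact h
    refine ⟨W 1, ?_⟩
    ext i
    fin_cases i <;> simp [hW0]
  · subst hJ
    simp [dotProduct, Fin.sum_univ_two, Matrix.vecHead, Matrix.vecTail]
  · refine ⟨![Complex.I * y / 2 / ((-y.im : ℝ) : ℂ), 0], ?_⟩
    ext i
    have hne : ((-y.im : ℝ) : ℂ) ≠ 0 := by
      exact_mod_cast neg_ne_zero.mpr hy
    fin_cases i <;>
      simp [hJ, Matrix.mulVec, dotProduct, Fin.sum_univ_two, mul_div_cancel₀,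
        mul_div_assoc] <;>
      field_simp <;> ring
  · intro h
    have := congrFun h 1
    simp at this
end
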